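/- Every subgroup of the Klein bottle group NS₂ = ⟨a, b | aba⁻¹b⟩ is generated by at most 2 elements. -/
import Mathlib


/-- The single defining relator `a b a⁻¹ b` of the Klein bottle group. -/
def kleinRels : Set (FreeGroup (Fin 2)) :=
  {FreeGroup.of 0 * FreeGroup.of 1 * (FreeGroup.of 0)⁻¹ * FreeGroup.of 1}

/-- The Klein bottle group `NS₂ = ⟨a, b ∣ a b a⁻¹ b⟩`. -/
abbrev KleinBottleGroup : Type := PresentedGroup kleinRels

namespace KleinAux

/-- Any `zpowers` subgroup is cyclic. -/
lemma isCyclic_zpowers {G : Type*} [Group G] (g : G) : IsCyclic (Subgroup.zpowers g) := by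
  refine ⟨⟨⟨g, Subgroup.mem_zpowers g⟩, fun x => ?_⟩⟩
  obtain ⟨k, hk⟩ := Subgroup.mem_zpowers_iff.mp x.2
  exact ⟨k, Subtype.ext (by simpa using hk)⟩

/-- Key structural lemma: if `φ : G →* A` with `A` cyclic and `ker φ` contained in a cyclic
subgroup `zpowers b`, then every subgroup of `G` is generated by two elements. -/
lemma key {G A : Type*} [Group G] [Group A] [IsCyclic A] (φ : G →* A) (b : G)
    (hker : φ.ker ≤ Subgroup.zpowers b) (H : Subgroup G) :
    ∃ x y : G, H = Subgroup.closure {x, y} := by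
  -- generator of the image
  haveI : IsCyclic (H.map φ) := Subgroup.isCyclic _
  obtain ⟨⟨m, hmH⟩, hm⟩ := IsCyclic.exists_generator (α := H.map φ)
  obtain ⟨x, hxH, hφx⟩ := hmH
  -- generator of the kernel part
  haveI : IsCyclic (Subgroup.zpowers b) := isCyclic_zpowers b
  haveI : IsCyclic (H ⊓ φ.ker : Subgroup G) :=
    Subgroup.isCyclic_of_le (le_trans inf_le_right hker)
  obtain ⟨⟨y, hyK⟩, hy⟩ := IsCyclic.exists_generator (α := (H ⊓ φ.ker : Subgroup G))
  refine ⟨x, y, le_antisymm ?_ ?_⟩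
  · intro h hh
    have hφh : φ h ∈ H.map φ := ⟨h, hh, rfl⟩
    obtain ⟨n, hn⟩ := Subgroup.mem_zpowers_iff.mp (hm ⟨φ h, hφh⟩)
    have hn' : φ x ^ n = φ h := by
      have := congrArg Subtype.val hn
      simpa [hφx] using this
    have hw : h * (x ^ n)⁻¹ ∈ H ⊓ φ.ker := by
      constructor
      · exact H.mul_mem hh (H.inv_mem (H.zpow_mem hxH n))
      · simp [MonoidHom.mem_ker, ← hn']
    obtain ⟨k, hk⟩ := Subgroup.mem_zpowers_iff.mp (hy ⟨h * (x ^ n)⁻¹, hw⟩)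
    have hk' : y ^ k = h * (x ^ n)⁻¹ := by
      have := congrArg Subtype.val hk
      simpa using this
    have : h = y ^ k * x ^ n := by rw [hk']; group
    rw [this]
    exact Subgroup.mul_mem _
      (Subgroup.zpow_mem _ (Subgroup.subset_closure (by simp)) k)
      (Subgroup.zpow_mem _ (Subgroup.subset_closure (by simp)) n)
  · rw [Subgroup.closure_le]
    rintro z (rfl | rfl)
    · exact hxH
    · exact hyK.1

/-- The generator `a`. -/
abbrev a : KleinBottleGroup := PresentedGroup.of 0
/-- The generator `b`. -/
abbrev b : KleinBottleGroup := PresentedGroup.of 1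

lemma rel : a * b * a⁻¹ * b = 1 := by
  have h : (FreeGroup.of 0 * FreeGroup.of 1 * (FreeGroup.of 0)⁻¹ * FreeGroup.of 1 :
      FreeGroup (Fin 2)) ∈ Subgroup.normalClosure kleinRels :=
    Subgroup.subset_normalClosure rfl
  show PresentedGroup.mk kleinRels _ * PresentedGroup.mk kleinRels _ *
    (PresentedGroup.mk kleinRels _)⁻¹ * PresentedGroup.mk kleinRels _ = 1
  rw [← map_inv, ← map_mul, ← map_mul, ← map_mul]
  exact (QuotientGroup.eq_one_iff _).mpr h

lemma conj_a : a * b * a⁻¹ = b⁻¹ :=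
  mul_eq_one_iff_eq_inv.mp rel

/-- Conjugation sends `b` to `b` or `b⁻¹`. -/
lemma conj_b (g : KleinBottleGroup) : g * b * g⁻¹ = b ∨ g * b * g⁻¹ = b⁻¹ := by
  let S : Subgroup KleinBottleGroup :=
    { carrier := {g | g * b * g⁻¹ = b ∨ g * b * g⁻¹ = b⁻¹}
      one_mem' := by simp
      mul_mem' := by
        have key : ∀ p q : KleinBottleGroup,
            p * q * b * (p * q)⁻¹ = p * (q * b * q⁻¹) * p⁻¹ := by intro p q; group
        rintro p q (hp | hp) (hq | hq)
        · exact Or.inl (by rw [key, hq, hp])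
        · refine Or.inr ?_
          rw [key, hq]
          calc p * b⁻¹ * p⁻¹ = (p * b * p⁻¹)⁻¹ := by group
          _ = b⁻¹ := by rw [hp]
        · exact Or.inr (by rw [key, hq, hp])
        · refine Or.inl ?_
          rw [key, hq]
          calc p * b⁻¹ * p⁻¹ = (p * b * p⁻¹)⁻¹ := by group
          _ = b := by rw [hp]; group
      inv_mem' := by
        rintro p (hp | hp)
        · refine Or.inl ?_
          show p⁻¹ * b * p⁻¹⁻¹ = b
          conv_lhs => rw [← hp]
          group
        · refine Or.inr ?_
          show p⁻¹ * b * p⁻¹⁻¹ = b⁻¹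
          have h2 : p * b⁻¹ * p⁻¹ = b := by
            have h3 : (p * b * p⁻¹)⁻¹ = (b⁻¹)⁻¹ := congrArg Inv.inv hp
            calc p * b⁻¹ * p⁻¹ = (p * b * p⁻¹)⁻¹ := by group
            _ = b := by rw [h3]; group
          conv_lhs => rw [← h2]
          group }
  refine PresentedGroup.generated_by kleinRels S (fun j => ?_) g
  fin_cases j
  · exact Or.inr conj_a
  · left; show b * b * b⁻¹ = b; group

instance : (Subgroup.zpowers b).Normal := by
  constructor
  intro n hn g
  obtain ⟨k, hk⟩ := Subgroup.mem_zpowers_iff.mp hn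
  have : g * n * g⁻¹ = (g * b * g⁻¹) ^ k := by rw [conj_zpow, hk]
  rw [this]
  rcases conj_b g with h | h <;> rw [h]
  · exact Subgroup.zpow_mem _ (Subgroup.mem_zpowers b) k
  · exact Subgroup.zpow_mem _ ((Subgroup.zpowers b).inv_mem (Subgroup.mem_zpowers b)) k

/-- The abelianization-style map to `Multiplicative ℤ`, `a ↦ 1`, `b ↦ 0`. -/
def φ : KleinBottleGroup →* Multiplicative ℤ :=
  PresentedGroup.toGroup (f := fun i => if i = 0 then Multiplicative.ofAdd 1 else 1)
    (by
      rintro r rfl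
      simp)

lemma φ_a : φ a = Multiplicative.ofAdd 1 := by simp [φ]
lemma φ_b : φ b = 1 := by simp [φ]

lemma ker_le : φ.ker ≤ Subgroup.zpowers b := by
  intro g hg
  let π := QuotientGroup.mk' (Subgroup.zpowers b)
  let s : Multiplicative ℤ →* KleinBottleGroup ⧸ Subgroup.zpowers b :=
    zpowersHom _ (π a)
  have hsφ : s.comp φ = π := by
    apply PresentedGroup.ext
    intro i
    fin_cases i
    · show s (φ a) = π a
      rw [φ_a]
      simp [s, zpowersHom_apply]
    · show s (φ b) = π b
      rw [φ_b, map_one]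
      exact ((QuotientGroup.eq_one_iff _).mpr (Subgroup.mem_zpowers b)).symm
  have : π g = 1 := by
    rw [← hsφ]
    show s (φ g) = 1
    rw [MonoidHom.mem_ker.mp hg, map_one]
  exact (QuotientGroup.eq_one_iff _).mp this

end KleinAux

/-- Every subgroup of the Klein bottle group is generated by at most 2 elements. -/
theorem klein_subgroup_rank_le_two (H : Subgroup KleinBottleGroup) :
    ∃ g₁ g₂ : KleinBottleGroup, H = Subgroup.closure {g₁, g₂} := by
  exact KleinAux.key KleinAux.φ KleinAux.b KleinAux.ker_le H
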